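/- arXiv:2404.07552 — 2 statements merged into one kernel-verified Lean document; each statement's English description precedes it below -/
import Mathlib

section
/- Let E and V be real normed vector spaces, let x* ∈ E, and let c > 0, K_L > 0, and ρ₀ > 0 with ρ₀ ≤ 1/(4·K_L·c). Let F : E → V be Fréchet differentiable at every point of the closed ball B̄(x*, ρ₀) within that ball, with derivative map DF, and suppose: (i) DF is Lipschitz on B̄(x*, ρ₀) with constant K_L, i.e., ‖DF(y) − DF(z)‖ ≤ K_L‖y − z‖ for y, z in the ball; (ii) for every θ ∈ B̄(x*, ρ₀) and every v ∈ E, ‖v‖ ≤ 2c·‖DF(θ) v‖. Then F is stable on B̄(x*, ρ₀) with constant 4c, i.e., ‖y − z‖ ≤ 4c·‖F(y) − F(z)‖ for all y, z ∈ B̄(x*, ρ₀). -/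
/-!
Expand `F` to first order around the midpoint `m` of `y` and `z`. Since `DF` is `K_L`-Lipschitz,
the mean value inequality bounds each half-step remainder by `K_L (‖y - z‖ / 2)²`, so
`‖F y - F z - DF m (y - z)‖ ≤ (K_L / 2) ‖y - z‖² ≤ K_L ρ₀ ‖y - z‖ ≤ ‖y - z‖ / (4c)`.
The lower bound on `DF m` then gives `‖y - z‖ ≤ 2c ‖F y - F z‖ + ‖y - z‖ / 2`. Expanding around
an endpoint instead would only give the remainder bound `K_L ‖y - z‖²`, too weak by a factor 2.
-/

section

variable {E V : Type*} [NormedAddCommGroup E] [NormedSpace ℝ E]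
  [NormedAddCommGroup V] [NormedSpace ℝ V]

theorem norm_sub_sub_fderiv_le_of_lipschitz {s : Set E} (hs : Convex ℝ s) {F : E → V}
    {DF : E → E →L[ℝ] V} (hF : ∀ x ∈ s, HasFDerivWithinAt F (DF x) s x) {K : ℝ} (hK : 0 ≤ K)
    {a b : E} (ha : a ∈ s) (hb : b ∈ s) (hDF : ∀ x ∈ s, ‖DF x - DF a‖ ≤ K * ‖x - a‖) :
    ‖F b - F a - DF a (b - a)‖ ≤ K * ‖b - a‖ ^ 2 := by
  have hseg : segment ℝ a b ⊆ s := hs.segment_subset ha hb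
  have hbound : ∀ x ∈ segment ℝ a b, ‖DF x - DF a‖ ≤ K * ‖b - a‖ := by
    rintro _ hx
    obtain ⟨t, ⟨ht₀, ht₁⟩, rfl⟩ := (segment_eq_image' ℝ a b ▸ hx :)
    calc ‖DF (a + t • (b - a)) - DF a‖ ≤ K * ‖a + t • (b - a) - a‖ := hDF _ (hseg hx)
      _ = K * (t * ‖b - a‖) := by
        rw [add_sub_cancel_left, norm_smul, Real.norm_of_nonneg ht₀]
      _ ≤ K * ‖b - a‖ := by
        gcongr
        exact mul_le_of_le_one_left (norm_nonneg _) ht₁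
  have := (convex_segment a b).norm_image_sub_le_of_norm_hasFDerivWithin_le'
    (fun x hx => (hF x (hseg hx)).mono hseg) hbound
    (left_mem_segment ℝ a b) (right_mem_segment ℝ a b)
  rwa [mul_assoc, ← sq] at this

theorem norm_sub_sub_fderiv_midpoint_le_of_lipschitz {s : Set E} (hs : Convex ℝ s)
    {F : E → V} {DF : E → E →L[ℝ] V} (hF : ∀ x ∈ s, HasFDerivWithinAt F (DF x) s x)
    {K : ℝ} (hK : 0 ≤ K) (hDF : ∀ x ∈ s, ∀ a ∈ s, ‖DF x - DF a‖ ≤ K * ‖x - a‖)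
    {y z : E} (hy : y ∈ s) (hz : z ∈ s) :
    ‖F y - F z - DF (midpoint ℝ y z) (y - z)‖ ≤ K / 2 * ‖y - z‖ ^ 2 := by
  set m := midpoint ℝ y z
  have hm : m ∈ s := hs.midpoint_mem hy hz
  have hym : y - m = (2⁻¹ : ℝ) • (y - z) := by simp only [m, midpoint_eq_smul_add, invOf_eq_inv]; module
  have hzm : z - m = -(2⁻¹ : ℝ) • (y - z) := by simp only [m, midpoint_eq_smul_add, invOf_eq_inv]; module
  have hsplit : F y - F z - DF m (y - z) =
      (F y - F m - DF m (y - m)) - (F z - F m - DF m (z - m)) := by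
    rw [hym, hzm, map_smul, map_smul]; module
  calc ‖F y - F z - DF m (y - z)‖
      ≤ ‖F y - F m - DF m (y - m)‖ + ‖F z - F m - DF m (z - m)‖ := hsplit ▸ norm_sub_le _ _
    _ ≤ K * ‖y - m‖ ^ 2 + K * ‖z - m‖ ^ 2 := by
      gcongr <;>
        exact norm_sub_sub_fderiv_le_of_lipschitz hs hF hK hm ‹_› fun x hx => hDF x hx m hm
    _ = K / 2 * ‖y - z‖ ^ 2 := by
      rw [hym, hzm, norm_smul, norm_smul]; norm_num; ring

end

theorem stability_criterion_general
    {E V : Type*} [NormedAddCommGroup E] [NormedSpace ℝ E]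
    [NormedAddCommGroup V] [NormedSpace ℝ V]
    (xstar : E) (c K_L ρ₀ : ℝ) (hc : 0 < c) (hKL : 0 < K_L)
    (hρ₀le : ρ₀ ≤ 1 / (4 * K_L * c))
    (F : E → V) (DF : E → E →L[ℝ] V)
    (hdiff : ∀ θ ∈ Metric.closedBall xstar ρ₀,
      HasFDerivWithinAt F (DF θ) (Metric.closedBall xstar ρ₀) θ)
    (hLip : ∀ y ∈ Metric.closedBall xstar ρ₀, ∀ z ∈ Metric.closedBall xstar ρ₀,
      ‖DF y - DF z‖ ≤ K_L * ‖y - z‖)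
    (hlb : ∀ θ ∈ Metric.closedBall xstar ρ₀, ∀ v : E, ‖v‖ ≤ 2 * c * ‖DF θ v‖) :
    ∀ y ∈ Metric.closedBall xstar ρ₀, ∀ z ∈ Metric.closedBall xstar ρ₀,
      ‖y - z‖ ≤ 4 * c * ‖F y - F z‖ := by
  intro y hy z hz
  set m := midpoint ℝ y z
  have hball := convex_closedBall xstar ρ₀
  have hdist : ‖y - z‖ ≤ 2 * ρ₀ := by
    rw [← dist_eq_norm]
    linarith [dist_triangle_right y z xstar, Metric.mem_closedBall.1 hy, Metric.mem_closedBall.1 hz]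
  have hKρ : K_L * ρ₀ ≤ 1 / (4 * c) := by
    rw [le_div_iff₀ (by positivity)] at hρ₀le ⊢
    linarith
  have hrem : ‖F y - F z - DF m (y - z)‖ ≤ 1 / (4 * c) * ‖y - z‖ :=
    calc ‖F y - F z - DF m (y - z)‖ ≤ K_L / 2 * ‖y - z‖ ^ 2 :=
          norm_sub_sub_fderiv_midpoint_le_of_lipschitz hball hdiff hKL.le hLip hy hz
      _ = K_L * (‖y - z‖ / 2) * ‖y - z‖ := by ring
      _ ≤ K_L * ρ₀ * ‖y - z‖ := by gcongr; linarith
      _ ≤ 1 / (4 * c) * ‖y - z‖ := by gcongr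
  have hDFm : ‖DF m (y - z)‖ ≤ ‖F y - F z‖ + 1 / (4 * c) * ‖y - z‖ :=
    (norm_le_norm_add_norm_sub _ _).trans (by gcongr)
  have habsorb : ‖y - z‖ ≤ 2 * c * ‖F y - F z‖ + ‖y - z‖ / 2 :=
    calc ‖y - z‖ ≤ 2 * c * ‖DF m (y - z)‖ := hlb m (hball.midpoint_mem hy hz) (y - z)
      _ ≤ 2 * c * (‖F y - F z‖ + 1 / (4 * c) * ‖y - z‖) := by gcongr
      _ = 2 * c * ‖F y - F z‖ + ‖y - z‖ / 2 := by field_simp; ring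
  linarith

/-- Stability criterion (Proposition 5 of Han et al.): if `F` has a Fréchet derivative `DF`
on the closed ball `B̄(x*, ρ₀)` (within the ball) which is `K_L`-Lipschitz there, if every
derivative satisfies the lower bound `‖v‖ ≤ 2c ‖DF θ v‖`, and if `ρ₀ ≤ 1/(4 K_L c)`, then
`F` is stable on the ball with constant `4c`. -/
theorem stability_criterion
    {E V : Type*} [NormedAddCommGroup E] [NormedSpace ℝ E]
    [NormedAddCommGroup V] [NormedSpace ℝ V]
    (xstar : E) (c K_L ρ₀ : ℝ) (hc : 0 < c) (hKL : 0 < K_L) (hρ₀ : 0 < ρ₀)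
    (hρ₀le : ρ₀ ≤ 1 / (4 * K_L * c))
    (F : E → V) (DF : E → E →L[ℝ] V)
    (hdiff : ∀ θ ∈ Metric.closedBall xstar ρ₀,
      HasFDerivWithinAt F (DF θ) (Metric.closedBall xstar ρ₀) θ)
    (hLip : ∀ y ∈ Metric.closedBall xstar ρ₀, ∀ z ∈ Metric.closedBall xstar ρ₀,
      ‖DF y - DF z‖ ≤ K_L * ‖y - z‖)
    (hlb : ∀ θ ∈ Metric.closedBall xstar ρ₀, ∀ v : E, ‖v‖ ≤ 2 * c * ‖DF θ v‖) :
    ∀ y ∈ Metric.closedBall xstar ρ₀, ∀ z ∈ Metric.closedBall xstar ρ₀,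
      ‖y - z‖ ≤ 4 * c * ‖F y - F z‖ :=
  stability_criterion_general xstar c K_L ρ₀ hc hKL hρ₀le F DF hdiff hLip hlb
end

section
/- Let E and V be real Banach spaces, let θ* ∈ E, and let ρ > 0. Let Q_N : E → V be Fréchet differentiable at every point of the closed ball B̄(θ*, ρ) within that ball, with derivative map DQ_N that is Lipschitz on B̄(θ*, ρ) with constant K_L > 0. Let T : E ≃L V be a continuous linear equivalence and set c := ‖T⁻¹‖, assumed positive. Let ρ₀ satisfy 0 < ρ₀ ≤ min(ρ, 1/(4·K_L·c)), and suppose that ‖T − DQ_N(θ)‖ ≤ 1/(2c) for every θ ∈ B̄(θ*, ρ₀). Then: (i) for every θ ∈ B̄(θ*, ρ₀), the continuous linear map DQ_N(θ) is bijective with continuous inverse satisfying ‖DQ_N(θ)⁻¹‖ ≤ 2c; and (ii) Q_N is stable on B̄(θ*, ρ₀) with constant 4c, i.e., ‖y − z‖ ≤ 4c·‖Q_N(y) − Q_N(z)‖ for all y, z ∈ B̄(θ*, ρ₀). -/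
/-
Write `A := DQ_N θ`. Since `‖T⁻¹‖ · ‖T - A‖ ≤ 1/2`, the map `A` approximates the equivalence `T`
well enough that `‖v‖ ≤ ‖T⁻¹‖ (‖A v‖ + ‖T - A‖ ‖v‖)` can be absorbed into `‖v‖ ≤ 2c ‖A v‖`;
surjectivity comes from the Newton-type iteration behind the inverse function theorem
(`ApproximatesLinearOn.surjective`). The same absorption, applied to `Q_N` itself, which
approximates `T` on the ball with constant `1/(2c)` by the mean value inequality, gives
`‖y - z‖ ≤ 2c ‖Q_N y - Q_N z‖`.
-/

open Set
open scoped NNReal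

section

variable {𝕜 E F : Type*} [NontriviallyNormedField 𝕜] [NormedAddCommGroup E] [NormedSpace 𝕜 E]
  [NormedAddCommGroup F] [NormedSpace 𝕜 F]

theorem ContinuousLinearMap.approximatesLinearOn_univ (A φ : E →L[𝕜] F) :
    ApproximatesLinearOn A φ univ ‖A - φ‖₊ := fun x _ y _ => by
  rw [← map_sub, ← sub_apply, coe_nnnorm]
  exact (A - φ).le_opNorm (x - y)

theorem ContinuousLinearEquiv.subsingleton_or_lt_inv_nnnorm_symm (f' : E ≃L[𝕜] F) {C : ℝ≥0}
    (h : ‖(f'.symm : F →L[𝕜] E)‖₊ * C < 1) :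
    Subsingleton E ∨ C < ‖(f'.symm : F →L[𝕜] E)‖₊⁻¹ := by
  by_cases hN : ‖(f'.symm : F →L[𝕜] E)‖₊ = 0
  · left
    refine ⟨fun x y => ?_⟩
    have hsymm : (f'.symm : F →L[𝕜] E) = 0 := nnnorm_eq_zero.1 hN
    rw [← f'.symm_apply_apply x, ← f'.symm_apply_apply y]
    simp [← ContinuousLinearEquiv.coe_coe, hsymm]
  · right
    rwa [NNReal.lt_inv_iff_mul_lt hN, mul_comm]

theorem ApproximatesLinearOn.norm_sub_le_div_mul_norm_image_sub {f : E → F} {f' : E ≃L[𝕜] F}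
    {s : Set E} {C : ℝ≥0} (hf : ApproximatesLinearOn f (f' : E →L[𝕜] F) s C)
    (hC : ‖(f'.symm : F →L[𝕜] E)‖ * C < 1) {x y : E} (hx : x ∈ s) (hy : y ∈ s) :
    ‖x - y‖ ≤ ‖(f'.symm : F →L[𝕜] E)‖ / (1 - ‖(f'.symm : F →L[𝕜] E)‖ * C) * ‖f x - f y‖ := by
  set N := ‖(f'.symm : F →L[𝕜] E)‖
  have hlin : ‖f' (x - y)‖ ≤ ‖f x - f y‖ + C * ‖x - y‖ :=
    (norm_le_norm_add_norm_sub _ _).trans (by gcongr; exact hf x hx y hy)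
  have hkey : ‖x - y‖ ≤ N * (‖f x - f y‖ + C * ‖x - y‖) :=
    calc ‖x - y‖ = ‖(f'.symm : F →L[𝕜] E) (f' (x - y))‖ := by simp
      _ ≤ N * ‖f' (x - y)‖ := (f'.symm : F →L[𝕜] E).le_opNorm _
      _ ≤ N * (‖f x - f y‖ + C * ‖x - y‖) := by gcongr
  rw [div_mul_eq_mul_div, le_div_iff₀ (by linarith)]
  linarith

theorem ContinuousLinearEquiv.exists_coe_eq_of_norm_symm_mul_norm_sub_lt [CompleteSpace E]
    (f' : E ≃L[𝕜] F) (A : E →L[𝕜] F)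
    (h : ‖(f'.symm : F →L[𝕜] E)‖ * ‖(f' : E →L[𝕜] F) - A‖ < 1) :
    ∃ S : E ≃L[𝕜] F, (S : E →L[𝕜] F) = A ∧ ‖(S.symm : F →L[𝕜] E)‖ ≤
      ‖(f'.symm : F →L[𝕜] E)‖ / (1 - ‖(f'.symm : F →L[𝕜] E)‖ * ‖(f' : E →L[𝕜] F) - A‖) := by
  set K := ‖(f'.symm : F →L[𝕜] E)‖ / (1 - ‖(f'.symm : F →L[𝕜] E)‖ * ‖(f' : E →L[𝕜] F) - A‖)
  have happrox : ApproximatesLinearOn A (f' : E →L[𝕜] F) univ ‖A - f'‖₊ :=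
    A.approximatesLinearOn_univ _
  have hC : ‖(f'.symm : F →L[𝕜] E)‖ * ‖A - f'‖₊ < 1 := by rwa [coe_nnnorm, norm_sub_rev]
  have hbound : ∀ v, ‖v‖ ≤ K * ‖A v‖ := fun v => by
    simpa [K, norm_sub_rev (A : E →L[𝕜] F)] using
      happrox.norm_sub_le_div_mul_norm_image_sub hC (mem_univ v) (mem_univ 0)
  have hbij : Function.Bijective A :=
    ⟨fun v w hvw => sub_eq_zero.1 <| norm_le_zero_iff.1 <| by
      simpa [hvw] using hbound (v - w),
     happrox.surjective (f'.subsingleton_or_lt_inv_nnnorm_symm (by exact_mod_cast hC))⟩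
  set e : E ≃ₗ[𝕜] F := LinearEquiv.ofBijective (A : E →ₗ[𝕜] F) hbij
  have he : ∀ w, ‖e.symm w‖ ≤ K * ‖w‖ := fun w => by
    simpa only [show A (e.symm w) = w from e.apply_symm_apply w] using hbound (e.symm w)
  refine ⟨e.toContinuousLinearEquivOfBounds ‖A‖ K A.le_opNorm he, rfl, ?_⟩
  exact ContinuousLinearMap.opNorm_le_bound _ (div_nonneg (norm_nonneg _) (by linarith)) he

end

theorem div_one_sub_mul_le_two_mul {N q : ℝ} (hN : 0 ≤ N) (hq : N * q ≤ 1 / 2) :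
    N / (1 - N * q) ≤ 2 * N := by
  rw [div_le_iff₀ (by linarith)]
  nlinarith

theorem Convex.approximatesLinearOn_of_hasFDerivWithinAt {E F : Type*} [NormedAddCommGroup E]
    [NormedSpace ℝ E] [NormedAddCommGroup F] [NormedSpace ℝ F] {s : Set E} (hs : Convex ℝ s)
    {f : E → F} {f' : E → E →L[ℝ] F} {φ : E →L[ℝ] F} {C : ℝ≥0}
    (hf : ∀ x ∈ s, HasFDerivWithinAt f (f' x) s x) (bound : ∀ x ∈ s, ‖f' x - φ‖ ≤ C) :
    ApproximatesLinearOn f φ s C := fun _ hx _ hy =>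
  hs.norm_image_sub_le_of_norm_hasFDerivWithin_le' hf bound hy hx

theorem correspondence_most_probable_transition_pathways_general
    {E V : Type*} [NormedAddCommGroup E] [NormedSpace ℝ E] [CompleteSpace E]
    [NormedAddCommGroup V] [NormedSpace ℝ V]
    (θstar : E) (ρ K_L : ℝ)
    (QN : E → V) (DQN : E → E →L[ℝ] V)
    (hdiff : ∀ θ ∈ Metric.closedBall θstar ρ,
      HasFDerivWithinAt QN (DQN θ) (Metric.closedBall θstar ρ) θ)
    (T : E ≃L[ℝ] V) (c : ℝ) (hc : c = ‖(T.symm : V →L[ℝ] E)‖)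
    (ρ₀ : ℝ) (hρ₀le : ρ₀ ≤ min ρ (1 / (4 * K_L * c)))
    (hclose : ∀ θ ∈ Metric.closedBall θstar ρ₀,
      ‖(T : E →L[ℝ] V) - DQN θ‖ ≤ 1 / (2 * c)) :
    (∀ θ ∈ Metric.closedBall θstar ρ₀,
      Function.Bijective (DQN θ) ∧
        ∃ Dinv : V →L[ℝ] E, (∀ v : E, Dinv (DQN θ v) = v) ∧
          (∀ w : V, DQN θ (Dinv w) = w) ∧ ‖Dinv‖ ≤ 2 * c) ∧
    (∀ y ∈ Metric.closedBall θstar ρ₀, ∀ z ∈ Metric.closedBall θstar ρ₀,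
      ‖y - z‖ ≤ 4 * c * ‖QN y - QN z‖) := by
  have hc0 : 0 ≤ c := hc ▸ norm_nonneg _
  have hhalf : c * (1 / (2 * c)) ≤ 1 / 2 :=
    calc c * (1 / (2 * c)) = c / c / 2 := by ring
      _ ≤ 1 / 2 := by gcongr; exact div_self_le_one c
  have hball : Metric.closedBall θstar ρ₀ ⊆ Metric.closedBall θstar ρ :=
    Metric.closedBall_subset_closedBall (hρ₀le.trans (min_le_left _ _))
  refine ⟨fun θ hθ => ?_, fun y hy z hz => ?_⟩
  · have hq : c * ‖(T : E →L[ℝ] V) - DQN θ‖ ≤ 1 / 2 :=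
      (mul_le_mul_of_nonneg_left (hclose θ hθ) hc0).trans hhalf
    obtain ⟨S, hSA, hS⟩ := T.exists_coe_eq_of_norm_symm_mul_norm_sub_lt (DQN θ)
      (by rw [← hc]; linarith)
    rw [← hc] at hS
    rw [← hSA]
    exact ⟨S.bijective, S.symm, S.symm_apply_apply, S.apply_symm_apply,
      hS.trans (div_one_sub_mul_le_two_mul hc0 hq)⟩
  · have happrox : ApproximatesLinearOn QN (T : E →L[ℝ] V) (Metric.closedBall θstar ρ₀)
        (1 / (2 * c)).toNNReal :=
      (convex_closedBall θstar ρ₀).approximatesLinearOn_of_hasFDerivWithinAt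
        (fun x hx => (hdiff x (hball hx)).mono hball) fun x hx => by
          rw [norm_sub_rev, Real.coe_toNNReal _ (by positivity)]
          exact hclose x hx
    have hC : c * (1 / (2 * c)).toNNReal ≤ 1 / 2 := by
      rwa [Real.coe_toNNReal _ (by positivity)]
    calc ‖y - z‖ ≤ c / (1 - c * (1 / (2 * c)).toNNReal) * ‖QN y - QN z‖ :=
          hc ▸ happrox.norm_sub_le_div_mul_norm_image_sub (by rw [← hc]; linarith) hy hz
      _ ≤ 2 * c * ‖QN y - QN z‖ := by gcongr; exact div_one_sub_mul_le_two_mul hc0 hC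
      _ ≤ 4 * c * ‖QN y - QN z‖ := by gcongr; norm_num

/-- Deterministic content of the paper's Theorem 5.5 (correspondence relation of the most
probable transition pathways in the mean-field sense): if `DQ_N` is `K_L`-Lipschitz on
`B̄(θ*, ρ)`, `T = DQ(θ*)` is a continuous linear equivalence with `c = ‖T⁻¹‖ > 0`,
`0 < ρ₀ ≤ min(ρ, 1/(4 K_L c))`, and `‖T - DQ_N θ‖ ≤ 1/(2c)` on `B̄(θ*, ρ₀)`, then each
`DQ_N θ` is invertible with `‖DQ_N(θ)⁻¹‖ ≤ 2c`, and `Q_N` is stable on `B̄(θ*, ρ₀)` with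
constant `4c`. -/
theorem correspondence_most_probable_transition_pathways
    {E V : Type*} [NormedAddCommGroup E] [NormedSpace ℝ E] [CompleteSpace E]
    [NormedAddCommGroup V] [NormedSpace ℝ V] [CompleteSpace V]
    (θstar : E) (ρ K_L : ℝ) (hρ : 0 < ρ) (hKL : 0 < K_L)
    (QN : E → V) (DQN : E → E →L[ℝ] V)
    (hdiff : ∀ θ ∈ Metric.closedBall θstar ρ,
      HasFDerivWithinAt QN (DQN θ) (Metric.closedBall θstar ρ) θ)
    (hLip : ∀ y ∈ Metric.closedBall θstar ρ, ∀ z ∈ Metric.closedBall θstar ρ,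
      ‖DQN y - DQN z‖ ≤ K_L * ‖y - z‖)
    (T : E ≃L[ℝ] V) (c : ℝ) (hc : c = ‖(T.symm : V →L[ℝ] E)‖) (hcpos : 0 < c)
    (ρ₀ : ℝ) (hρ₀ : 0 < ρ₀) (hρ₀le : ρ₀ ≤ min ρ (1 / (4 * K_L * c)))
    (hclose : ∀ θ ∈ Metric.closedBall θstar ρ₀,
      ‖(T : E →L[ℝ] V) - DQN θ‖ ≤ 1 / (2 * c)) :
    (∀ θ ∈ Metric.closedBall θstar ρ₀,
      Function.Bijective (DQN θ) ∧
        ∃ Dinv : V →L[ℝ] E, (∀ v : E, Dinv (DQN θ v) = v) ∧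
          (∀ w : V, DQN θ (Dinv w) = w) ∧ ‖Dinv‖ ≤ 2 * c) ∧
    (∀ y ∈ Metric.closedBall θstar ρ₀, ∀ z ∈ Metric.closedBall θstar ρ₀,
      ‖y - z‖ ≤ 4 * c * ‖QN y - QN z‖) :=
  correspondence_most_probable_transition_pathways_general θstar ρ K_L QN DQN hdiff T c hc ρ₀ hρ₀le
    hclose
end
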